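/- arXiv:2006.03135 — 4 statements merged into one kernel-verified Lean document; each statement's English description precedes it below -/
import Mathlib

section
/- Let $I_0 = [\alpha,\beta]$ be a compact interval and $\phi: I_0 \to \mathbb{R}$ be $C^2$. Then for any $r > 0$ there exists a finite partition $\mathcal{P}$ of $I_0$ into subintervals that is admissible for $\phi$ at scale $r$, i.e., every $I \in \mathcal{P}$ satisfies property $P(r)$, and for every pair of adjacent $I, J \in \mathcal{P}$ the union $I \cup J$ fails $P(r)$. -/
/-!
Greedy construction: from the current left endpoint `x`, jump to the supremum of all `y ≤ β`
such that `[x, y]` satisfies `P(r)`. Since `P(r)` passes to limits from the left, the interval up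
to the supremum still satisfies `P(r)`, and by maximality no union of two consecutive intervals
does. The construction reaches `β` in finitely many steps because the linearization error
`φ s - φ c - φ' c (s - c)` is bounded by `|s - c|` times the oscillation of `φ'` on `[c, s]`, so by
uniform continuity of `φ'` on `[α, β]` every interval shorter than some `δ > 0` satisfies `P(r)`.
-/

/-- Property `P(r)` for `φ` on the interval `[x,y]`. -/
def propP (φ : ℝ → ℝ) (x y r : ℝ) : Prop :=
  ∀ s ∈ Set.Icc x y, ∀ c ∈ Set.Icc x y, |φ s - φ c - deriv φ c * (s - c)| ≤ 2 * r

open Set Filter Topology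

lemma abs_sub_sub_deriv_mul_le {f : ℝ → ℝ} {c s ε : ℝ}
    (hf : ∀ u ∈ uIcc c s, DifferentiableAt ℝ f u)
    (hε : ∀ u ∈ uIcc c s, |deriv f u - deriv f c| ≤ ε) :
    |f s - f c - deriv f c * (s - c)| ≤ ε * |s - c| := by
  have key := (convex_uIcc c s).norm_image_sub_le_of_norm_hasDerivWithin_le
    (f := fun u => f u - deriv f c * u) (f' := fun u => deriv f u - deriv f c)
    (fun u hu => ((hf u hu).hasDerivAt.sub ((hasDerivAt_id u).const_mul (deriv f c))
      ).hasDerivWithinAt.congr_deriv (by simp)) hε left_mem_uIcc right_mem_uIcc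
  simp only [Real.norm_eq_abs] at key
  convert key using 2
  ring

section propP

variable {φ : ℝ → ℝ} {x y r : ℝ}

lemma propP_self (hr : 0 ≤ r) : propP φ x x r := by
  intro s hs c hc
  rw [le_antisymm hs.2 hs.1, le_antisymm hc.2 hc.1]
  simpa using hr

lemma propP.mono_right {z : ℝ} (h : propP φ x z r) (hyz : y ≤ z) : propP φ x y r :=
  fun s hs c hc => h s (Icc_subset_Icc le_rfl hyz hs) c (Icc_subset_Icc le_rfl hyz hc)

lemma propP_of_forall_lt (hφ : ContDiff ℝ 1 φ) (hxy : x < y)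
    (h : ∀ z ∈ Ioo x y, propP φ x z r) : propP φ x y r := by
  intro s hs c hc
  have hφc := hφ.continuous
  have hφ'c := hφ.continuous_deriv le_rfl
  -- truncating `s` and `c` at `z ∈ (x, y)` brings them into `[x, z]`
  set g : ℝ → ℝ := fun z =>
    |φ (min s z) - φ (min c z) - deriv φ (min c z) * (min s z - min c z)|
  have hg : Tendsto g (𝓝[<] y) (𝓝 (g y)) :=
    (by fun_prop : Continuous g).continuousAt.tendsto.mono_left nhdsWithin_le_nhds
  have hgy : g y = |φ s - φ c - deriv φ c * (s - c)| := by
    simp only [g, min_eq_left hs.2, min_eq_left hc.2]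
  rw [← hgy]
  refine le_of_tendsto hg ?_
  filter_upwards [Ioo_mem_nhdsLT hxy] with z hz
  exact h z hz _ ⟨le_min hs.1 hz.1.le, min_le_right _ _⟩ _ ⟨le_min hc.1 hz.1.le, min_le_right _ _⟩

lemma exists_pos_forall_propP (hφ : ContDiff ℝ 1 φ) (α β : ℝ) (hr : 0 < r) :
    ∃ δ > 0, ∀ x y, α ≤ x → y ≤ β → y - x ≤ δ → propP φ x y r := by
  obtain ⟨η, hη, hunif⟩ := Metric.uniformContinuousOn_iff.mp
    (isCompact_Icc.uniformContinuousOn_of_continuous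
      (hφ.continuous_deriv le_rfl).continuousOn) 1 one_pos
  refine ⟨min (η / 2) (2 * r), by positivity, fun x y hx hy hxy s hs c hc => ?_⟩
  have hsc : |s - c| ≤ min (η / 2) (2 * r) :=
    abs_sub_le_iff.mpr ⟨by linarith [hs.2, hc.1], by linarith [hs.1, hc.2]⟩
  have hmem : ∀ u ∈ uIcc c s, u ∈ Icc α β := fun u hu =>
    uIcc_subset_Icc ⟨hx.trans hc.1, hc.2.trans hy⟩ ⟨hx.trans hs.1, hs.2.trans hy⟩ hu
  calc |φ s - φ c - deriv φ c * (s - c)| ≤ 1 * |s - c| := by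
        refine abs_sub_sub_deriv_mul_le (fun u _ => hφ.differentiable one_ne_zero u)
          fun u hu => (hunif u (hmem u hu) c (hmem c left_mem_uIcc) ?_).le
        rw [Real.dist_eq]
        linarith [abs_sub_left_of_mem_uIcc hu, min_le_left (η / 2) (2 * r)]
    _ ≤ 2 * r := by linarith [min_le_right (η / 2) (2 * r)]

end propP

/-- The right endpoint of the longest interval `[x, y] ⊆ [x, β]` satisfying `P(r)`. -/
noncomputable def greedyNext (φ : ℝ → ℝ) (r β x : ℝ) : ℝ :=
  sSup {y ∈ Icc x β | propP φ x y r}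

section greedyNext

variable {φ : ℝ → ℝ} {r β x y : ℝ}

lemma bddAbove_propP_Icc : BddAbove {y ∈ Icc x β | propP φ x y r} :=
  ⟨β, fun _ hy => hy.1.2⟩

lemma le_greedyNext (hy : y ∈ Icc x β) (h : propP φ x y r) : y ≤ greedyNext φ r β x :=
  le_csSup bddAbove_propP_Icc ⟨hy, h⟩

lemma greedyNext_le (hr : 0 ≤ r) (hx : x ≤ β) : greedyNext φ r β x ≤ β :=
  csSup_le ⟨x, ⟨le_rfl, hx⟩, propP_self hr⟩ fun _ hy => hy.1.2

lemma propP_greedyNext (hφ : ContDiff ℝ 1 φ) (hr : 0 ≤ r) (hx : x ≤ β)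
    (hlt : x < greedyNext φ r β x) : propP φ x (greedyNext φ r β x) r := by
  refine propP_of_forall_lt hφ hlt fun z hz => ?_
  obtain ⟨w, hw, hzw⟩ := exists_lt_of_lt_csSup
    (⟨x, ⟨le_rfl, hx⟩, propP_self hr⟩ : {y ∈ Icc x β | propP φ x y r}.Nonempty) hz.2
  exact hw.2.mono_right hzw.le

lemma not_propP_of_greedyNext_lt (hxy : x ≤ y) (hy : y ≤ β) (hlt : greedyNext φ r β x < y) :
    ¬ propP φ x y r :=
  fun h => (le_greedyNext ⟨hxy, hy⟩ h).not_gt hlt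

end greedyNext

section iterate

variable {F : ℝ → ℝ} {α β δ : ℝ}

lemma iterate_mem_Icc_of_le_step (hδ : 0 ≤ δ) (hαβ : α ≤ β)
    (hF : ∀ x ∈ Icc α β, min (x + δ) β ≤ F x ∧ F x ≤ β) (j : ℕ) : F^[j] α ∈ Icc α β := by
  induction j with
  | zero => exact ⟨le_rfl, hαβ⟩
  | succ j ih =>
    rw [Function.iterate_succ_apply']
    have hle : F^[j] α ≤ F (F^[j] α) := (le_min (by linarith) ih.2).trans (hF _ ih).1
    exact ⟨ih.1.trans hle, (hF _ ih).2⟩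

lemma min_add_mul_le_iterate (hδ : 0 ≤ δ) (hαβ : α ≤ β)
    (hF : ∀ x ∈ Icc α β, min (x + δ) β ≤ F x ∧ F x ≤ β) (j : ℕ) :
    min (α + j * δ) β ≤ F^[j] α := by
  induction j with
  | zero => simp
  | succ j ih =>
    rw [Function.iterate_succ_apply']
    refine le_trans ?_ (hF _ (iterate_mem_Icc_of_le_step hδ hαβ hF j)).1
    push_cast
    rcases min_cases (α + j * δ) β with ⟨h, -⟩ | ⟨h, -⟩ <;> rw [h] at ih
    · exact min_le_min (by linarith) le_rfl
    · exact min_le_right _ _ |>.trans (le_min (by linarith) le_rfl)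

lemma exists_iterate_eq_of_le_step (hδ : 0 < δ) (hαβ : α ≤ β)
    (hF : ∀ x ∈ Icc α β, min (x + δ) β ≤ F x ∧ F x ≤ β) : ∃ n, F^[n] α = β := by
  refine ⟨⌈(β - α) / δ⌉₊, le_antisymm (iterate_mem_Icc_of_le_step hδ.le hαβ hF _).2 ?_⟩
  have hceil : β - α ≤ ⌈(β - α) / δ⌉₊ * δ := (div_le_iff₀ hδ).mp (Nat.le_ceil _)
  simpa [min_eq_right (by linarith : β ≤ α + ⌈(β - α) / δ⌉₊ * δ)] using
    min_add_mul_le_iterate hδ.le hαβ hF ⌈(β - α) / δ⌉₊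

end iterate

/-- Every `C²` function on a compact interval `[α,β]` admits an admissible partition
at any scale `r > 0`: a finite partition `α = t 0 < t 1 < ⋯ < t n = β` such that every
interval satisfies `P(r)` and every union of two adjacent intervals fails `P(r)`. -/
theorem stmt_5 (α β r : ℝ) (hαβ : α < β) (hr : 0 < r) (φ : ℝ → ℝ) (hφ : ContDiff ℝ 2 φ) :
    ∃ n : ℕ, 1 ≤ n ∧ ∃ t : ℕ → ℝ, t 0 = α ∧ t n = β ∧
      (∀ j, j < n → t j < t (j + 1)) ∧
      (∀ j, j + 1 ≤ n → propP φ (t j) (t (j + 1)) r) ∧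
      (∀ j, j + 2 ≤ n → ¬ propP φ (t j) (t (j + 2)) r) := by
  have hφ1 : ContDiff ℝ 1 φ := hφ.of_le (by norm_num)
  obtain ⟨δ, hδ, hshort⟩ := exists_pos_forall_propP hφ1 α β hr
  set F := greedyNext φ r β
  have hF : ∀ x ∈ Icc α β, min (x + δ) β ≤ F x ∧ F x ≤ β := fun x hx =>
    ⟨le_greedyNext ⟨le_min (by linarith) hx.2, min_le_right _ _⟩
      (hshort x _ hx.1 (min_le_right _ _) (by linarith [min_le_left (x + δ) β])),
      greedyNext_le hr.le hx.2⟩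
  set t : ℕ → ℝ := fun j => F^[j] α
  have ht_succ (j : ℕ) : t (j + 1) = F (t j) := Function.iterate_succ_apply' F j α
  have ht_mem : ∀ j, t j ∈ Icc α β := iterate_mem_Icc_of_le_step hδ.le hαβ.le hF
  have hreach : ∃ n, t n = β := exists_iterate_eq_of_le_step hδ hαβ.le hF
  set n := Nat.find hreach
  have ht_lt (j : ℕ) (hj : j < n) : t j < β := (ht_mem j).2.lt_of_ne (Nat.find_min hreach hj)
  have ht_step (j : ℕ) (hj : j < n) : t j < t (j + 1) := by
    rw [ht_succ]
    exact (lt_min (by linarith) (ht_lt j hj)).trans_le (hF _ (ht_mem j)).1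
  have htn : t n = β := Nat.find_spec hreach
  have hn : 1 ≤ n := Nat.pos_of_ne_zero fun h0 => hαβ.ne (by rwa [h0] at htn)
  refine ⟨n, hn, t, rfl, htn, ht_step, fun j hj => ?_, fun j hj => ?_⟩
  · have h₁ := ht_step j hj
    rw [ht_succ] at h₁ ⊢
    exact propP_greedyNext hφ1 hr.le (ht_mem j).2 h₁
  · have h₁ := ht_step j (by omega)
    have h₂ := ht_step (j + 1) (by omega)
    rw [ht_succ j] at h₁ h₂
    exact not_propP_of_greedyNext_lt (h₁.trans h₂).le (ht_mem _).2 h₂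
end

section
/- Let $\phi: I_0 \to \mathbb{R}$ be $C^2$ on a compact interval $I_0$, $\delta > 0$, and let $\mathcal{P}$ be a sub-admissible partition of $I_0$ for $\phi$ at scale $\delta$. Then the number of intervals in $\mathcal{P}$ is at most $|I_0| \cdot \delta^{-1/2}\|\phi''\|_\infty^{1/2} + 1$. -/
/-!
Each union of two adjacent intervals of the partition fails `P(δ)`, so it contains a point `s`
with `4δ < |φ''(s)| L² ≤ M L²`, where `L` is its length: hence `L ≥ 2 √(δ / M)`.
The `n - 1` such unions cover `[A, B]` at most twice, so `(n - 1) · 2√δ ≤ 2 (B - A) √M`.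
-/

open Finset

theorem sum_range_sub_two_step (t : ℕ → ℝ) (m : ℕ) :
    ∑ j ∈ range (m + 1), (t (j + 2) - t j) = (t (m + 2) - t 1) + (t (m + 1) - t 0) := by
  induction m with
  | zero => simp
  | succ m ih => rw [sum_range_succ, ih]; ring

theorem sub_one_mul_le_two_mul_of_le_sub_two_step {t : ℕ → ℝ} {n : ℕ} {c : ℝ}
    (hc : 0 ≤ c) (hmono : ∀ j < n, t j ≤ t (j + 1))
    (hgap : ∀ j, j + 2 ≤ n → c ≤ t (j + 2) - t j) :
    ((n : ℝ) - 1) * c ≤ 2 * (t n - t 0) := by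
  rcases n with _ | _ | m
  · simpa using hc
  · simpa using hmono 0 one_pos
  · have h01 : t 0 ≤ t 1 := hmono 0 (by omega)
    have hlast : t (m + 1) ≤ t (m + 2) := hmono (m + 1) (by omega)
    have hsum : ∑ j ∈ range (m + 1), c ≤ ∑ j ∈ range (m + 1), (t (j + 2) - t j) :=
      sum_le_sum fun j hj => hgap j (by have := mem_range.1 hj; omega)
    rw [sum_const, card_range, nsmul_eq_mul, sum_range_sub_two_step] at hsum
    push_cast at hsum ⊢
    linarith

theorem two_mul_sqrt_le_sqrt_mul_of_lt_mul_sq {δ a M L : ℝ} (h : 4 * δ < a * L ^ 2)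
    (haM : a ≤ M) (hL : 0 ≤ L) : 2 * √δ ≤ √M * L := by
  have hle : 4 * δ ≤ M * L ^ 2 := h.le.trans (mul_le_mul_of_nonneg_right haM (sq_nonneg L))
  calc 2 * √δ = √(2 ^ 2 * δ) := by
        rw [Real.sqrt_mul (sq_nonneg 2), Real.sqrt_sq zero_le_two]
    _ = √(4 * δ) := by norm_num
    _ ≤ √(M * L ^ 2) := Real.sqrt_le_sqrt hle
    _ = √M * L := by rw [Real.sqrt_mul' _ (sq_nonneg L), Real.sqrt_sq hL]

theorem continuous_deriv_deriv {f : ℝ → ℝ} (hf : ContDiff ℝ 2 f) :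
    Continuous (deriv (deriv f)) := by
  simpa [iteratedDeriv_succ, iteratedDeriv_one] using hf.continuous_iteratedDeriv' 2

theorem stmt_7_general (A B δ : ℝ) (hδ : 0 < δ) (φ : ℝ → ℝ) (hφ : ContDiff ℝ 2 φ)
    (n : ℕ) (t : ℕ → ℝ) (ht0 : t 0 = A) (htn : t n = B)
    (hmono : ∀ j, j < n → t j < t (j + 1))
    (hsubadm : ∀ j, j + 2 ≤ n →
      ¬ (∀ s ∈ Set.Icc (t j) (t (j + 2)),
          |deriv (deriv φ) s| * (t (j + 2) - t j) ^ 2 ≤ 4 * δ))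
    (M : ℝ) (hM : M = sSup ((fun s => |deriv (deriv φ) s|) '' Set.Icc A B)) :
    (n : ℝ) ≤ (B - A) * Real.sqrt M / Real.sqrt δ + 1 := by
  have hbound : ∀ s ∈ Set.Icc A B, |deriv (deriv φ) s| ≤ M := fun s hs =>
    hM ▸ le_csSup (isCompact_Icc.bddAbove_image
      (continuous_abs.comp (continuous_deriv_deriv hφ)).continuousOn) ⟨s, hs, rfl⟩
  have ht : MonotoneOn t (Set.Iic n) := (strictMonoOn_Iic_of_lt_succ hmono).monotoneOn
  -- The counting lemma is applied to `√M * t`, so that `M = 0` needs no separate treatment.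
  have hgap : ∀ j, j + 2 ≤ n → 2 * √δ ≤ √M * t (j + 2) - √M * t j := by
    intro j hj
    obtain ⟨s, hs, hlt⟩ := not_forall₂.1 (hsubadm j hj)
    have hj_mem : j ∈ Set.Iic n := show j ≤ n by omega
    have hj2_mem : j + 2 ∈ Set.Iic n := show j + 2 ≤ n from hj
    have hsAB : s ∈ Set.Icc A B :=
      ⟨ht0 ▸ (ht (Nat.zero_le n) hj_mem (Nat.zero_le j)).trans hs.1,
        hs.2.trans (htn ▸ ht hj2_mem Set.self_mem_Iic hj)⟩
    have hL : 0 ≤ t (j + 2) - t j := sub_nonneg.2 (ht hj_mem hj2_mem (by omega))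
    rw [← mul_sub]
    exact two_mul_sqrt_le_sqrt_mul_of_lt_mul_sq (not_le.1 hlt) (hbound s hsAB) hL
  have hcount := sub_one_mul_le_two_mul_of_le_sub_two_step (by positivity)
    (fun j hj => mul_le_mul_of_nonneg_left (hmono j hj).le (Real.sqrt_nonneg M)) hgap
  rw [ht0, htn] at hcount
  have hsδ : 0 < √δ := Real.sqrt_pos.2 hδ
  have : (n : ℝ) - 1 ≤ (B - A) * √M / √δ := by rw [le_div_iff₀ hsδ]; linarith
  linarith

/-- The number of intervals in a sub-admissible partition of `[A,B]` for `φ` at scale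
`δ` is at most `|I₀| δ^{-1/2} ‖φ''‖_∞^{1/2} + 1`. -/
theorem stmt_7 (A B δ : ℝ) (hAB : A ≤ B) (hδ : 0 < δ) (φ : ℝ → ℝ) (hφ : ContDiff ℝ 2 φ)
    (n : ℕ) (t : ℕ → ℝ) (ht0 : t 0 = A) (htn : t n = B)
    (hmono : ∀ j, j < n → t j < t (j + 1))
    (hsubadm : ∀ j, j + 2 ≤ n →
      ¬ (∀ s ∈ Set.Icc (t j) (t (j + 2)),
          |deriv (deriv φ) s| * (t (j + 2) - t j) ^ 2 ≤ 4 * δ))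
    (M : ℝ) (hM : M = sSup ((fun s => |deriv (deriv φ) s|) '' Set.Icc A B)) :
    (n : ℝ) ≤ (B - A) * Real.sqrt M / Real.sqrt δ + 1 :=
  stmt_7_general A B δ hδ φ hφ n t ht0 htn hmono hsubadm M hM
end

section
/- Let $0 < l_0 \le 1/4$ and let $\mathcal{P}$ be a collection of pairwise disjoint subintervals of $[0,1]$, each having length at least $l_0$ and at most $2 l_0$. Then there exists $l \in \{2^{-k} : k \in \mathbb{N}\}$ with $4 \le l/l_0 < 8$ and a decomposition $\mathcal{P} = \mathcal{U}_1 \cup \mathcal{U}_2$ such that: (1) every $I \in \mathcal{U}_1$ is contained in some dyadic interval $[(j-1)l, jl]$ with $1 \le j \le l^{-1}$, and each such dyadic interval contains fewer than 8 intervals of $\mathcal{U}_1$; (2) every $I \in \mathcal{U}_2$ is contained in some shifted interval $[(j-1/2)l, (j+1/2)l] \cap [0,1]$ with $1 \le j \le l^{-1}$, and each such shifted interval contains fewer than 8 intervals of $\mathcal{U}_2$. -/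
/-!
Take `l = 2^{-k}` with `4 l₀ ≤ l < 8 l₀`. An interval of length at most `2 l₀ ≤ l / 2` either lies
in the dyadic tile containing its left endpoint or crosses that tile's right end, and then lies
within `l / 2` of it, i.e. in a shifted tile. Each tile has length `l < 8 l₀` while the disjoint
intervals in it have length at least `l₀`, so by additivity of Lebesgue measure there are fewer
than 8 of them.
-/

open MeasureTheory Set

theorem card_mul_le_of_pairwiseDisjoint_Icc {S : Finset (ℝ × ℝ)} {l₀ c d : ℝ} (hcd : c ≤ d)
    (hlen : ∀ p ∈ S, l₀ ≤ p.2 - p.1) (hsub : ∀ p ∈ S, Icc p.1 p.2 ⊆ Icc c d)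
    (hdisj : (S : Set (ℝ × ℝ)).PairwiseDisjoint fun p => Icc p.1 p.2) :
    S.card * l₀ ≤ d - c :=
  calc S.card * l₀ = ∑ _p ∈ S, l₀ := by simp
    _ ≤ ∑ p ∈ S, volume.real (Icc p.1 p.2) :=
      Finset.sum_le_sum fun p hp =>
        (hlen p hp).trans <| Real.volume_real_Icc (a := p.1) ▸ le_max_left _ _
    _ = volume.real (⋃ p ∈ S, Icc p.1 p.2) :=
      (measureReal_biUnion_finset hdisj (fun _ _ => measurableSet_Icc)
        fun _ _ => measure_Icc_lt_top.ne).symm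
    _ ≤ volume.real (Icc c d) := measureReal_mono (iUnion₂_subset hsub) measure_Icc_lt_top.ne
    _ = d - c := Real.volume_real_Icc_of_le hcd

theorem card_lt_of_pairwiseDisjoint_Icc {S : Finset (ℝ × ℝ)} {l₀ c d : ℝ} {n : ℕ}
    (hl₀ : 0 < l₀) (hcd : c ≤ d) (hn : d - c < n * l₀)
    (hlen : ∀ p ∈ S, l₀ ≤ p.2 - p.1) (hsub : ∀ p ∈ S, Icc p.1 p.2 ⊆ Icc c d)
    (hdisj : (S : Set (ℝ × ℝ)).PairwiseDisjoint fun p => Icc p.1 p.2) :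
    S.card < n := by
  have := (card_mul_le_of_pairwiseDisjoint_Icc hcd hlen hsub hdisj).trans_lt hn
  exact_mod_cast lt_of_mul_lt_mul_right this hl₀.le

theorem exists_two_zpow_neg_mem_Ico {x : ℝ} (hx : 0 < x) (hx₁ : x ≤ 1) :
    ∃ k : ℕ, x ≤ (2 : ℝ) ^ (-(k : ℤ)) ∧ (2 : ℝ) ^ (-(k : ℤ)) < 2 * x := by
  obtain ⟨n, hlt, hle⟩ := exists_mem_Ioc_zpow hx one_lt_two
  have hn : n + 1 ≤ 0 := by
    by_contra! h
    linarith [one_le_zpow₀ one_le_two (by omega : 0 ≤ n) (a := (2 : ℝ))]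
  refine ⟨(-(n + 1)).toNat, ?_, ?_⟩ <;> rw [Int.toNat_of_nonneg (by omega), neg_neg]
  · exact hle
  · rw [zpow_add_one₀ two_ne_zero]; linarith

theorem exists_dyadic_or_shifted_tile {l a b : ℝ} {n : ℕ} (hl : 0 < l) (hn : l⁻¹ = n)
    (ha : 0 ≤ a) (hb : b ≤ 1) (hab : a < b) (hlen : b - a ≤ l / 2) :
    ∃ j : ℕ, 1 ≤ j ∧ (j : ℝ) ≤ l⁻¹ ∧
      (Icc a b ⊆ Icc ((j - 1) * l) (j * l) ∨
        Icc a b ⊆ Icc ((j - 1 / 2) * l) ((j + 1 / 2) * l)) := by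
  set m := ⌊a / l⌋₊
  have hm : m * l ≤ a := (le_div_iff₀ hl).1 (Nat.floor_le (div_nonneg ha hl.le))
  have hm' : a < (m + 1) * l := (div_lt_iff₀ hl).1 (Nat.lt_floor_add_one _)
  have hmn : m + 1 ≤ n := by
    have : (m : ℝ) < n := by
      rw [← hn, inv_eq_one_div, lt_div_iff₀ hl]; linarith
    exact_mod_cast this
  refine ⟨m + 1, by omega, by rw [hn]; exact_mod_cast hmn, ?_⟩
  push_cast
  by_cases hbm : b ≤ (m + 1) * l
  · left; exact Icc_subset_Icc (by linarith) hbm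
  · right; exact Icc_subset_Icc (by linarith) (by linarith)

open Classical in
/-- Tiling lemma: a disjoint collection of subintervals of `[0,1]` with lengths in
`[l₀, 2l₀]` can be split into two subcollections, one fitting into dyadic intervals of
length `l ∈ 2^{-ℕ}` with `4 ≤ l/l₀ < 8`, the other into half-shifted dyadic intervals,
with fewer than 8 members of the collection in each tile. -/
theorem stmt_8 (l₀ : ℝ) (hl₀ : 0 < l₀) (hl₀' : l₀ ≤ 1/4)
    (P : Finset (ℝ × ℝ))
    (hP : ∀ p ∈ P, 0 ≤ p.1 ∧ p.2 ≤ 1 ∧ l₀ ≤ p.2 - p.1 ∧ p.2 - p.1 ≤ 2 * l₀)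
    (hdisj : ∀ p ∈ P, ∀ q ∈ P, p ≠ q → Disjoint (Set.Icc p.1 p.2) (Set.Icc q.1 q.2)) :
    ∃ k : ℕ, ∃ U₁ U₂ : Finset (ℝ × ℝ),
      (4 ≤ (2:ℝ) ^ (-(k:ℤ)) / l₀ ∧ (2:ℝ) ^ (-(k:ℤ)) / l₀ < 8) ∧
      U₁ ∪ U₂ = P ∧
      (∀ p ∈ U₁, ∃ j : ℕ, 1 ≤ j ∧ (j : ℝ) ≤ ((2:ℝ) ^ (-(k:ℤ)))⁻¹ ∧
        Set.Icc p.1 p.2 ⊆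
          Set.Icc (((j:ℝ) - 1) * (2:ℝ) ^ (-(k:ℤ))) ((j:ℝ) * (2:ℝ) ^ (-(k:ℤ)))) ∧
      (∀ j : ℕ, (U₁.filter (fun p => Set.Icc p.1 p.2 ⊆
          Set.Icc (((j:ℝ) - 1) * (2:ℝ) ^ (-(k:ℤ))) ((j:ℝ) * (2:ℝ) ^ (-(k:ℤ))))).card < 8) ∧
      (∀ p ∈ U₂, ∃ j : ℕ, 1 ≤ j ∧ (j : ℝ) ≤ ((2:ℝ) ^ (-(k:ℤ)))⁻¹ ∧
        Set.Icc p.1 p.2 ⊆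
          Set.Icc (((j:ℝ) - 1/2) * (2:ℝ) ^ (-(k:ℤ))) (((j:ℝ) + 1/2) * (2:ℝ) ^ (-(k:ℤ))) ∩
            Set.Icc 0 1) ∧
      (∀ j : ℕ, (U₂.filter (fun p => Set.Icc p.1 p.2 ⊆
          Set.Icc (((j:ℝ) - 1/2) * (2:ℝ) ^ (-(k:ℤ)))
            (((j:ℝ) + 1/2) * (2:ℝ) ^ (-(k:ℤ))))).card < 8) := by
  obtain ⟨k, hk₁, hk₂⟩ := exists_two_zpow_neg_mem_Ico (x := 4 * l₀) (by positivity) (by linarith)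
  set l : ℝ := (2 : ℝ) ^ (-(k : ℤ))
  have hl : 0 < l := by positivity
  have hl_inv : l⁻¹ = ((2 ^ k : ℕ) : ℝ) := by simp [l, zpow_neg]
  have hdisjP : (P : Set (ℝ × ℝ)).PairwiseDisjoint fun p => Icc p.1 p.2 :=
    fun p hp q hq => hdisj p hp q hq
  have hcount : ∀ S ⊆ P, ∀ c d : ℝ, c ≤ d → d - c = l →
      (∀ p ∈ S, Icc p.1 p.2 ⊆ Icc c d) → S.card < 8 := fun S hS c d hcd hdc hsub =>
    card_lt_of_pairwiseDisjoint_Icc hl₀ hcd (by push_cast; linarith)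
      (fun p hp => (hP p (hS hp)).2.2.1) hsub (hdisjP.subset (Finset.coe_subset.2 hS))
  let Q : ℝ × ℝ → Prop := fun p =>
    ∃ j : ℕ, 1 ≤ j ∧ (j : ℝ) ≤ l⁻¹ ∧ Icc p.1 p.2 ⊆ Icc ((j - 1) * l) (j * l)
  refine ⟨k, P.filter Q, P.filter (¬ Q ·), ⟨?_, ?_⟩, Finset.filter_union_filter_not_eq Q P,
    fun p hp => (Finset.mem_filter.1 hp).2, fun j => ?_, fun p hp => ?_, fun j => ?_⟩
  · rw [le_div_iff₀ hl₀]; linarith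
  · rw [div_lt_iff₀ hl₀]; linarith
  · exact hcount _ ((Finset.filter_subset _ _).trans (Finset.filter_subset _ _)) _ _
      (by nlinarith) (by ring) fun p hp => (Finset.mem_filter.1 hp).2
  · obtain ⟨hpP, hpQ⟩ := Finset.mem_filter.1 hp
    obtain ⟨ha, hb, hlen, hlen₂⟩ := hP p hpP
    obtain ⟨j, hj, hjl, hdyadic | hshifted⟩ :=
      exists_dyadic_or_shifted_tile hl hl_inv ha hb (by linarith) (by linarith)
    · exact absurd ⟨j, hj, hjl, hdyadic⟩ hpQ
    · exact ⟨j, hj, hjl, subset_inter hshifted (Icc_subset_Icc ha hb)⟩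
  · exact hcount _ ((Finset.filter_subset _ _).trans (Finset.filter_subset _ _)) _ _
      (by nlinarith) (by ring) fun p hp => (Finset.mem_filter.1 hp).2
end

section
/- Let $d \ge 1$, and let $q$ be a real polynomial of degree at most $d$ whose coefficients have absolute values summing to $\lambda > 0$. Then for any $\sigma > 0$, the sublevel set $\{s \in [0,1] : |q(s)| < \sigma \lambda\}$ is a union of at most $C(d)$ intervals (relatively open in $[0,1]$), and its Lebesgue measure is at most $C(d)\, \sigma^{1/d}$, where $C(d)$ is a constant depending only on $d$. -/
/-!
If `|q| ≤ c` on an interval `[a, b] ⊆ [0, 1]` of length `ℓ`, Lagrange interpolation at `d + 1`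
equally spaced nodes of `[a, b]` bounds `|q|` on all of `[0, 1]` by `(d + 1) (d / ℓ) ^ d c`, and
interpolation at the fixed nodes `i / d` bounds the coefficient sum `λ` by a constant (depending
only on `d`) times the values of `q` at those nodes. Hence `ℓ ^ d λ ≲_d c`, which for `c = σ λ` is
`ℓ ≲_d σ ^ (1 / d)`. The sublevel set `{|q| < c}` is `{q ^ 2 - c ^ 2 < 0}`, so by the intermediate
value theorem it is a union of intervals with endpoints among the at most `2 d` roots of
`q ^ 2 - c ^ 2` and two points outside `[0, 1]`: at most `(2 d + 2) ^ 2` intervals.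
-/

open Polynomial Finset

namespace Lagrange

variable {F ι : Type*} [NormedField F] [DecidableEq ι] {s : Finset ι} {v : ι → F} {Q : F[X]}

theorem norm_eval_le (hvs : Set.InjOn v s) (hQ : Q.degree < #s) (y : F) :
    ‖Q.eval y‖ ≤ ∑ i ∈ s, ‖Q.eval (v i)‖ * ∏ j ∈ s.erase i, ‖y - v j‖ / ‖v i - v j‖ := by
  conv_lhs => rw [eq_interpolate hvs hQ]
  rw [interpolate_apply, eval_finsetSum]
  refine (norm_sum_le _ _).trans_eq (sum_congr rfl fun i _ => ?_)
  simp [Lagrange.basis, basisDivisor, eval_prod, norm_prod, div_eq_inv_mul]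

theorem sum_norm_coeff_le (hvs : Set.InjOn v s) (hQ : Q.degree < #s) (t : Finset ℕ) :
    ∑ k ∈ t, ‖Q.coeff k‖ ≤
      ∑ i ∈ s, ‖Q.eval (v i)‖ * ∑ k ∈ t, ‖(Lagrange.basis s v i).coeff k‖ := by
  conv_lhs => rw [eq_interpolate hvs hQ]
  simp only [interpolate_apply, finsetSum_coeff, coeff_C_mul, mul_sum, ← norm_mul]
  rw [sum_comm]
  exact sum_le_sum fun k _ => norm_sum_le _ _

end Lagrange

noncomputable def equispacedNode (a ℓ : ℝ) (d i : ℕ) : ℝ := a + ℓ * i / d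

section SublevelSet

variable {d : ℕ}

theorem equispacedNode_sub (a ℓ : ℝ) (d i j : ℕ) :
    equispacedNode a ℓ d i - equispacedNode a ℓ d j = ℓ * ((i : ℝ) - j) / d := by
  simp only [equispacedNode]
  ring

theorem equispacedNode_injective {a ℓ : ℝ} (hℓ : ℓ ≠ 0) (hd : d ≠ 0) :
    Function.Injective (equispacedNode a ℓ d) := by
  intro i j hij
  have := equispacedNode_sub a ℓ d i j
  rw [hij, sub_self, eq_comm, div_eq_zero_iff] at this
  simp_all [sub_eq_zero]

theorem div_le_abs_equispacedNode_sub {a ℓ : ℝ} (hℓ : 0 < ℓ) {i j : ℕ} (hij : i ≠ j) :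
    ℓ / d ≤ |equispacedNode a ℓ d i - equispacedNode a ℓ d j| := by
  have hij' : (1 : ℤ) ≤ |(i : ℤ) - j| := Int.one_le_abs (sub_ne_zero.mpr (by exact_mod_cast hij))
  have hij'' : (1 : ℝ) ≤ |(i : ℝ) - j| := by exact_mod_cast hij'
  rw [equispacedNode_sub, abs_div, abs_mul, abs_of_pos hℓ, Nat.abs_cast]
  gcongr
  nlinarith

theorem equispacedNode_mem_Icc {a ℓ : ℝ} (hℓ : 0 ≤ ℓ) {i : ℕ} (hi : i ≤ d) :
    equispacedNode a ℓ d i ∈ Set.Icc a (a + ℓ) := by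
  have h0 : 0 ≤ (i : ℝ) / d := by positivity
  have h1 : (i : ℝ) / d ≤ 1 := div_le_one_of_le₀ (by exact_mod_cast hi) d.cast_nonneg
  rw [equispacedNode, mul_div_assoc]
  constructor <;> nlinarith

theorem degree_lt_card_range_succ {Q : ℝ[X]} (hQ : Q.natDegree ≤ d) :
    Q.degree < #(range (d + 1)) := by
  rw [card_range]
  exact Q.degree_le_natDegree.trans_lt (by exact_mod_cast Nat.lt_succ_of_le hQ)

theorem abs_eval_le_of_abs_eval_equispacedNode_le {Q : ℝ[X]} {a ℓ M y : ℝ} (hd : d ≠ 0)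
    (hℓ : 0 < ℓ) (hQ : Q.natDegree ≤ d)
    (hM : ∀ i ∈ range (d + 1), |Q.eval (equispacedNode a ℓ d i)| ≤ M)
    (hy : ∀ j ∈ range (d + 1), |y - equispacedNode a ℓ d j| ≤ 1) :
    |Q.eval y| ≤ (d + 1) * (d / ℓ) ^ d * M := by
  have hvs := (equispacedNode_injective (a := a) hℓ.ne' hd).injOn (s := range (d + 1))
  refine (Lagrange.norm_eval_le hvs (degree_lt_card_range_succ hQ) y).trans ?_
  have hM0 : 0 ≤ M := (abs_nonneg _).trans (hM 0 (by simp))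
  have hterm : ∀ i ∈ range (d + 1), |Q.eval (equispacedNode a ℓ d i)| *
      ∏ j ∈ (range (d + 1)).erase i,
        |y - equispacedNode a ℓ d j| / |equispacedNode a ℓ d i - equispacedNode a ℓ d j| ≤
      M * (d / ℓ) ^ d := by
    intro i hi
    have hpow : (d / ℓ) ^ d = ∏ _j ∈ (range (d + 1)).erase i, (d / ℓ : ℝ) := by
      rw [prod_const, card_erase_of_mem hi, card_range, Nat.add_sub_cancel]
    rw [hpow]
    refine mul_le_mul (hM i hi) (prod_le_prod (fun j _ => by positivity) fun j hj => ?_)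
      (prod_nonneg fun j _ => by positivity) hM0
    calc |y - equispacedNode a ℓ d j| / |equispacedNode a ℓ d i - equispacedNode a ℓ d j|
        ≤ 1 / (ℓ / d) := div_le_div₀ zero_le_one (hy j (mem_of_mem_erase hj))
          (by positivity) (div_le_abs_equispacedNode_sub hℓ (ne_of_mem_erase hj).symm)
      _ = d / ℓ := one_div_div ℓ d
  calc _ ≤ ∑ _i ∈ range (d + 1), M * (d / ℓ) ^ d := sum_le_sum hterm
    _ = (d + 1) * (d / ℓ) ^ d * M := by
      rw [sum_const, card_range, nsmul_eq_mul]
      push_cast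
      ring

noncomputable def equispacedLagrangeConst (d : ℕ) : ℝ :=
  ∑ i ∈ range (d + 1), ∑ k ∈ range (d + 1),
    |(Lagrange.basis (range (d + 1)) (equispacedNode 0 1 d) i).coeff k|

theorem sum_abs_coeff_le_equispacedLagrangeConst_mul {Q : ℝ[X]} {M : ℝ} (hd : d ≠ 0)
    (hQ : Q.natDegree ≤ d) (hM : ∀ i ∈ range (d + 1), |Q.eval (equispacedNode 0 1 d i)| ≤ M) :
    ∑ k ∈ range (d + 1), |Q.coeff k| ≤ equispacedLagrangeConst d * M := by
  have hvs := (equispacedNode_injective (a := 0) one_ne_zero hd).injOn (s := range (d + 1))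
  refine (Lagrange.sum_norm_coeff_le hvs (degree_lt_card_range_succ hQ) _).trans ?_
  rw [equispacedLagrangeConst, sum_mul]
  simp_rw [mul_comm _ M]
  exact sum_le_sum fun i hi =>
    mul_le_mul_of_nonneg_right (hM i hi) (sum_nonneg fun _ _ => abs_nonneg _)

theorem pow_sub_mul_sum_abs_coeff_le {q : ℝ[X]} {a b c : ℝ} (hd : d ≠ 0)
    (hq : q.natDegree ≤ d) (ha : 0 ≤ a) (hab : a < b) (hb : b ≤ 1)
    (hc : ∀ x ∈ Set.Icc a b, |q.eval x| ≤ c) :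
    (b - a) ^ d * ∑ k ∈ range (d + 1), |q.coeff k| ≤
      equispacedLagrangeConst d * (d + 1) * d ^ d * c := by
  set ℓ := b - a
  have hℓ : 0 < ℓ := sub_pos.mpr hab
  have hnode : ∀ i ∈ range (d + 1), equispacedNode a ℓ d i ∈ Set.Icc a b := fun i hi => by
    simpa [ℓ] using equispacedNode_mem_Icc (a := a) hℓ.le (Nat.lt_succ_iff.mp (mem_range.mp hi))
  have hgrid : ∀ i ∈ range (d + 1),
      |q.eval (equispacedNode 0 1 d i)| ≤ (d + 1) * (d / ℓ) ^ d * c := by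
    intro i hi
    refine abs_eval_le_of_abs_eval_equispacedNode_le hd hℓ hq
      (fun j hj => hc _ (hnode j hj)) fun j hj => ?_
    have hy := equispacedNode_mem_Icc (a := 0) zero_le_one (Nat.lt_succ_iff.mp (mem_range.mp hi))
    have hx := hnode j hj
    rw [zero_add] at hy
    rw [abs_le]
    constructor <;> linarith [hx.1, hx.2, hy.1, hy.2]
  calc ℓ ^ d * ∑ k ∈ range (d + 1), |q.coeff k|
      ≤ ℓ ^ d * (equispacedLagrangeConst d * ((d + 1) * (d / ℓ) ^ d * c)) := by
        gcongr
        exact sum_abs_coeff_le_equispacedLagrangeConst_mul hd hq hgrid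
    _ = equispacedLagrangeConst d * (d + 1) * d ^ d * c := by
        rw [div_pow]
        field_simp

theorem le_mul_rpow_of_pow_le_mul {x K σ : ℝ} (hd : d ≠ 0) (hx : 0 ≤ x) (hK : 1 ≤ K)
    (hσ : 0 ≤ σ) (h : x ^ d ≤ K * σ) : x ≤ K * σ ^ ((1 : ℝ) / d) := by
  have hd' : (1 : ℝ) / d ≤ 1 :=
    div_le_one_of_le₀ (by exact_mod_cast Nat.one_le_iff_ne_zero.mpr hd) d.cast_nonneg
  calc x = (x ^ d) ^ ((1 : ℝ) / d) := by rw [one_div, Real.pow_rpow_inv_natCast hx hd]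
    _ ≤ (K * σ) ^ ((1 : ℝ) / d) := by gcongr
    _ = K ^ ((1 : ℝ) / d) * σ ^ ((1 : ℝ) / d) := Real.mul_rpow (by linarith) hσ
    _ ≤ K * σ ^ ((1 : ℝ) / d) := by gcongr; exact Real.rpow_le_self_of_one_le hK hd'

noncomputable def sublevelLengthConst (d : ℕ) : ℝ :=
  max (equispacedLagrangeConst d * (d + 1) * d ^ d) 1

theorem sub_le_of_abs_eval_lt {q : ℝ[X]} {a b σ : ℝ} (hd : d ≠ 0) (hq : q.natDegree ≤ d)
    (ha : 0 ≤ a) (hb : b ≤ 1) (hσ : 0 ≤ σ) (hlam : 0 < ∑ k ∈ range (d + 1), |q.coeff k|)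
    (hlt : ∀ x ∈ Set.Ioo a b, |q.eval x| < σ * ∑ k ∈ range (d + 1), |q.coeff k|) :
    b - a ≤ sublevelLengthConst d * σ ^ ((1 : ℝ) / d) := by
  have hK : 1 ≤ sublevelLengthConst d := le_max_right _ _
  rcases le_or_gt b a with hba | hab
  · nlinarith [Real.rpow_nonneg hσ ((1 : ℝ) / d)]
  have hle : ∀ x ∈ Set.Icc a b, |q.eval x| ≤ σ * ∑ k ∈ range (d + 1), |q.coeff k| := by
    rw [← closure_Ioo hab.ne]
    exact closure_minimal (fun x hx => (hlt x hx).le)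
      (isClosed_le (Polynomial.continuous q).abs continuous_const)
  have hpow := pow_sub_mul_sum_abs_coeff_le hd hq ha hab hb hle
  rw [← mul_assoc] at hpow
  refine le_mul_rpow_of_pow_le_mul hd (sub_pos.mpr hab).le hK hσ ?_
  exact (le_of_mul_le_mul_right hpow hlam).trans
    (mul_le_mul_of_nonneg_right (le_max_left _ _) hσ)

open MeasureTheory in
theorem volume_Ioo_inter_Icc_le {q : ℝ[X]} {a b σ : ℝ} (hd : d ≠ 0) (hq : q.natDegree ≤ d)
    (hσ : 0 ≤ σ) (hlam : 0 < ∑ k ∈ range (d + 1), |q.coeff k|)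
    (hsub : Set.Ioo a b ∩ Set.Icc 0 1 ⊆
      {x | |q.eval x| < σ * ∑ k ∈ range (d + 1), |q.coeff k|}) :
    volume (Set.Ioo a b ∩ Set.Icc 0 1) ≤
      ENNReal.ofReal (sublevelLengthConst d * σ ^ ((1 : ℝ) / d)) := by
  have hIcc : Set.Ioo a b ∩ Set.Icc 0 1 ⊆ Set.Icc (max a 0) (min b 1) :=
    fun x ⟨h, h01⟩ => ⟨max_le h.1.le h01.1, le_min h.2.le h01.2⟩
  have hIoo : Set.Ioo (max a 0) (min b 1) ⊆ Set.Ioo a b ∩ Set.Icc 0 1 := fun x ⟨h1, h2⟩ =>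
    ⟨⟨(le_max_left a 0).trans_lt h1, h2.trans_le (min_le_left b 1)⟩,
      (le_max_right a 0).trans h1.le, h2.le.trans (min_le_right b 1)⟩
  calc volume (Set.Ioo a b ∩ Set.Icc 0 1) ≤ volume (Set.Icc (max a 0) (min b 1)) :=
        measure_mono hIcc
    _ = ENNReal.ofReal (min b 1 - max a 0) := Real.volume_Icc
    _ ≤ _ := ENNReal.ofReal_le_ofReal <| sub_le_of_abs_eval_lt hd hq (le_max_right a 0)
        (min_le_right b 1) hσ hlam fun x hx => hsub (hIoo hx)

end SublevelSet

theorem exists_mem_Ioo_forall_neg {f : ℝ → ℝ} (hf : Continuous f) {T : Finset ℝ}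
    (hT : ∀ x, f x = 0 → x ∈ T) {s : ℝ} (hs : f s < 0) (hlo : ∃ a ∈ T, a < s)
    (hhi : ∃ b ∈ T, s < b) :
    ∃ a ∈ T, ∃ b ∈ T, s ∈ Set.Ioo a b ∧ ∀ x ∈ Set.Ioo a b, f x < 0 := by
  obtain ⟨a, ha, has⟩ := hlo
  obtain ⟨b, hb, hsb⟩ := hhi
  have hA : (T.filter (· < s)).Nonempty := ⟨a, mem_filter.mpr ⟨ha, has⟩⟩
  have hB : (T.filter (s < ·)).Nonempty := ⟨b, mem_filter.mpr ⟨hb, hsb⟩⟩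
  obtain ⟨haT, has'⟩ := mem_filter.mp (max'_mem _ hA)
  obtain ⟨hbT, hsb'⟩ := mem_filter.mp (min'_mem _ hB)
  refine ⟨_, haT, _, hbT, ⟨has', hsb'⟩, fun x hx => ?_⟩
  by_contra! hfx
  obtain ⟨z, hz, hz0⟩ := isPreconnected_Ioo.intermediate_value ⟨has', hsb'⟩ hx
    hf.continuousOn ⟨hs.le, hfx⟩
  rcases lt_trichotomy z s with h | rfl | h
  · exact (le_max' _ z (mem_filter.mpr ⟨hT z hz0, h⟩)).not_gt hz.1
  · exact hs.ne hz0
  · exact (min'_le _ z (mem_filter.mpr ⟨hT z hz0, h⟩)).not_gt hz.2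

theorem exists_eq_iUnion_Ioo_inter_Icc (p : ℝ[X]) :
    ∃ n ≤ (p.natDegree + 2) ^ 2, ∃ I : Fin n → ℝ × ℝ,
      (∀ i, Set.Ioo (I i).1 (I i).2 ∩ Set.Icc 0 1 ⊆ {x | p.eval x < 0}) ∧
      {x ∈ Set.Icc (0 : ℝ) 1 | p.eval x < 0} = ⋃ i, Set.Ioo (I i).1 (I i).2 ∩ Set.Icc 0 1 := by
  classical
  -- `-1` and `2` flank `[0, 1]`, so every point of `[0, 1]` has points of `T` on both sides.
  set T : Finset ℝ := insert (-1) (insert 2 p.roots.toFinset)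
  have hT : #T ≤ p.natDegree + 2 := by
    have := p.roots.toFinset_card_le.trans p.card_roots'
    have := card_insert_le (-1 : ℝ) (insert 2 p.roots.toFinset)
    have := card_insert_le (2 : ℝ) p.roots.toFinset
    simp only [T]
    omega
  set F := (T ×ˢ T).filter fun I => Set.Ioo I.1 I.2 ∩ Set.Icc 0 1 ⊆ {x | p.eval x < 0}
  have hF : ∀ I ∈ F, Set.Ioo I.1 I.2 ∩ Set.Icc 0 1 ⊆ {x | p.eval x < 0} :=
    fun I hI => (mem_filter.mp hI).2
  refine ⟨#F, ?_, fun i => F.equivFin.symm i, fun i => hF _ (F.equivFin.symm i).2, ?_⟩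
  · calc #F ≤ #(T ×ˢ T) := card_filter_le _ _
      _ = #T ^ 2 := by rw [card_product, sq]
      _ ≤ _ := Nat.pow_le_pow_left hT 2
  ext s
  simp only [Set.mem_sep_iff, Set.mem_iUnion]
  constructor
  · rintro ⟨hs01, hs⟩
    have hp : p ≠ 0 := by rintro rfl; simp at hs
    obtain ⟨a, ha, b, hb, hsab, hneg⟩ := exists_mem_Ioo_forall_neg p.continuous (T := T)
      (fun x hx => mem_insert_of_mem (mem_insert_of_mem
        (Multiset.mem_toFinset.mpr ((mem_roots hp).mpr hx))))
      hs ⟨-1, mem_insert_self _ _, by linarith [hs01.1]⟩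
      ⟨2, mem_insert_of_mem (mem_insert_self _ _), by linarith [hs01.2]⟩
    have habF : (a, b) ∈ F :=
      mem_filter.mpr ⟨mem_product.mpr ⟨ha, hb⟩, fun x hx => hneg x hx.1⟩
    exact ⟨F.equivFin ⟨(a, b), habF⟩, by simpa using ⟨hsab, hs01⟩⟩
  · rintro ⟨i, hi⟩
    exact ⟨hi.2, hF _ (F.equivFin.symm i).2 hi⟩

open Polynomial MeasureTheory in
/-- Sublevel set estimate: for a real polynomial `q` of degree at most `d` whose
coefficients' absolute values sum to `λ > 0`, and any `σ > 0`, the set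
`{s ∈ [0,1] : |q(s)| < σλ}` is a union of at most `C(d)` relatively open subintervals
of `[0,1]`, of total measure at most `C(d) σ^{1/d}`. -/
theorem stmt_13 (d : ℕ) (hd : 1 ≤ d) :
    ∃ C : ℝ, 0 < C ∧ ∀ q : Polynomial ℝ, q.natDegree ≤ d →
      ∀ lam : ℝ, lam = ∑ i ∈ Finset.range (d + 1), |q.coeff i| → 0 < lam →
      ∀ σ : ℝ, 0 < σ →
        (∃ n : ℕ, (n : ℝ) ≤ C ∧ ∃ S : Fin n → Set ℝ,
          (∀ i, ∃ a b : ℝ, S i = Set.Ioo a b ∩ Set.Icc 0 1) ∧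
          {s ∈ Set.Icc (0:ℝ) 1 | |q.eval s| < σ * lam} = ⋃ i, S i) ∧
        volume {s ∈ Set.Icc (0:ℝ) 1 | |q.eval s| < σ * lam} ≤
          ENNReal.ofReal (C * σ ^ ((1:ℝ)/(d:ℝ))) := by
  have hd0 : d ≠ 0 := Nat.one_le_iff_ne_zero.mp hd
  have hK : 1 ≤ sublevelLengthConst d := le_max_right _ _
  refine ⟨(2 * d + 2) ^ 2 * sublevelLengthConst d, by positivity, ?_⟩
  rintro q hq _ rfl hlam σ hσ
  set c := σ * ∑ k ∈ range (d + 1), |q.coeff k|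
  have hc : 0 < c := mul_pos hσ hlam
  set p := q * q - C (c ^ 2)
  have hpq : ∀ x, p.eval x < 0 ↔ |q.eval x| < c := fun x => by
    rw [eval_sub, eval_mul, eval_C, sub_neg, ← sq, sq_lt_sq, abs_of_pos hc]
  have hp : p.natDegree ≤ 2 * d :=
    (natDegree_sub_le _ _).trans (max_le (natDegree_mul_le.trans (by omega)) (by simp))
  obtain ⟨n, hn, I, hIneg, hIU⟩ := exists_eq_iUnion_Ioo_inter_Icc p
  have hnC : (n : ℝ) ≤ (2 * d + 2) ^ 2 := by exact_mod_cast hn.trans (by gcongr)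
  simp_rw [← hpq]
  rw [hIU]
  refine ⟨⟨n, hnC.trans (le_mul_of_one_le_right (by positivity) hK), _,
    fun i => ⟨_, _, rfl⟩, rfl⟩, ?_⟩
  calc volume (⋃ i, Set.Ioo (I i).1 (I i).2 ∩ Set.Icc 0 1)
      ≤ ∑ i, volume (Set.Ioo (I i).1 (I i).2 ∩ Set.Icc 0 1) := measure_iUnion_fintype_le _ _
    _ ≤ ∑ _i : Fin n, ENNReal.ofReal (sublevelLengthConst d * σ ^ ((1 : ℝ) / d)) :=
        sum_le_sum fun i _ => volume_Ioo_inter_Icc_le hd0 hq hσ.le hlam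
          fun x hx => (hpq x).mp (hIneg i hx)
    _ = ENNReal.ofReal (n * (sublevelLengthConst d * σ ^ ((1 : ℝ) / d))) := by
        rw [sum_const, card_univ, Fintype.card_fin, nsmul_eq_mul,
          ENNReal.ofReal_mul (Nat.cast_nonneg n), ENNReal.ofReal_natCast]
    _ ≤ _ := ENNReal.ofReal_le_ofReal (by rw [mul_assoc]; gcongr)
end
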